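/- arXiv:2101.04587 — 2 statements merged into one kernel-verified Lean document; each statement's English description precedes it below -/
import Mathlib

section
/- Suppose Ω ⊊ ℝⁿ is an (ε,δ)-domain. Then there is a constant C_ε depending only on ε and n such that for all x, y ∈ Ω with |x−y| < δ there exists a curve γ′ ⊆ Ω joining x to y with ∫_{γ′} ds/d_Ω(z) ≤ C_ε·(j_Ω(x,y) + 1). In particular k_Ω(x,y) ≤ C_ε·(j_Ω(x,y) + 1) whenever |x−y| < δ. -/
/-!
Let `γ` be the Jones curve from `x` to `y`: its length is at most `|x - y| / ε` and
`d(z) ≥ ε |z - x| |z - y| / |x - y|` along it. On the subarc of `γ` that stays outside the balls of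
radius `|x - y| / 4` about `x` and `y`, `d ≥ ε |x - y| / 16`, so that subarc has quasihyperbolic
length at most `16 / ε²`. Towards `x`, the points of `γ` at distance `2⁻ʲ |x - y| / 4` from `x`
are at distance `≳ ε 2⁻ʲ |x - y|` from `∂Ω`; consecutive ones, and the last one and `x` itself
once `2⁻ʲ |x - y| ≲ d(x)`, are joined by Jones curves of quasihyperbolic length `O_ε(1)`. This
takes `≈ log₂ (|x - y| / d(x)) ≲ j_Ω(x, y)` hops, and symmetrically towards `y`.
-/

open Set Metric MeasureTheory
open scoped ENNReal

noncomputable section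

abbrev Eu (n : ℕ) := EuclideanSpace ℝ (Fin n)

variable {n : ℕ}

/-- Distance to the boundary of `Ω`. -/
def dOm (Ω : Set (Eu n)) (x : Eu n) : ℝ := Metric.infDist x (frontier Ω)

/-- A (Lipschitz) curve in `Ω` from `x` to `y`, parametrized on `[0,1]`. -/
structure IsCurve (Ω : Set (Eu n)) (γ : ℝ → Eu n) (x y : Eu n) : Prop where
  lipschitz : ∃ K, LipschitzOnWith K γ (Set.Icc 0 1)
  source : γ 0 = x
  target : γ 1 = y
  mem : ∀ t ∈ Set.Icc (0:ℝ) 1, γ t ∈ Ω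

/-- Arclength of the portion of the curve between parameters `t₁` and `t₂`. -/
def arclengthOn (γ : ℝ → Eu n) (t₁ t₂ : ℝ) : ℝ := ∫ t in t₁..t₂, ‖deriv γ t‖

/-- Arclength of a curve parametrized on `[0,1]`. -/
def arclength (γ : ℝ → Eu n) : ℝ := arclengthOn γ 0 1

/-- Line integral `∫_γ g ds` of a function `g` along a curve `γ`. -/
def lineIntegral (g : Eu n → ℝ) (γ : ℝ → Eu n) : ℝ := ∫ t in (0:ℝ)..1, g (γ t) * ‖deriv γ t‖

/-- The quasi-hyperbolic distance `k_Ω`. -/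
def kDist (Ω : Set (Eu n)) (x y : Eu n) : ℝ :=
  sInf { r | ∃ γ : ℝ → Eu n, IsCurve Ω γ x y ∧ r = lineIntegral (fun z => (dOm Ω z)⁻¹) γ }

/-- Quasi-hyperbolic distance from a point to a set. -/
def kDistSet (Ω : Set (Eu n)) (x : Eu n) (S : Set (Eu n)) : ℝ := sInf (kDist Ω x '' S)

/-- The distance `j_Ω`. -/
def jDist (Ω : Set (Eu n)) (x y : Eu n) : ℝ :=
  (1/2) * Real.log ((1 + dist x y / dOm Ω x) * (1 + dist x y / dOm Ω y))

/-- A quasi-hyperbolic geodesic from `x` to `y` in `Ω`. -/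
def IsQHGeodesic (Ω : Set (Eu n)) (γ : ℝ → Eu n) (x y : Eu n) : Prop :=
  IsCurve Ω γ x y ∧ lineIntegral (fun z => (dOm Ω z)⁻¹) γ = kDist Ω x y

/-- `Ω` is a domain: a nonempty proper open connected subset of `ℝⁿ`. -/
def IsDom (Ω : Set (Eu n)) : Prop := IsOpen Ω ∧ IsConnected Ω ∧ Ω ≠ Set.univ

/-- `(ε,δ)`-domain in the sense of Jones. -/
def IsEpsDeltaDomain (Ω : Set (Eu n)) (ε δ : ℝ) : Prop :=
  ∀ x ∈ Ω, ∀ y ∈ Ω, dist x y < δ → ∃ γ : ℝ → Eu n, IsCurve Ω γ x y ∧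
    arclength γ ≤ ε⁻¹ * dist x y ∧
    ∀ t ∈ Set.Icc (0:ℝ) 1, dOm Ω (γ t) ≥ ε * (dist (γ t) x * dist (γ t) y) / dist x y

/-- Closed axis-parallel cube with lower corner `a` and sidelength `l`. -/
def cube (a : Eu n) (l : ℝ) : Set (Eu n) := {x : Eu n | ∀ i, x i ∈ Set.Icc (a i) (a i + l)}

/-- `cube a l` is a dyadic cube. -/
def IsDyadic (a : Eu n) (l : ℝ) : Prop :=
  ∃ (k : ℤ) (m : Fin n → ℤ), l = 2 ^ (-k) ∧ ∀ i, a i = (m i : ℝ) * 2 ^ (-k)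

/-- The dyadic cube of generation `k` indexed by `m`. -/
def dyCube (k : ℤ) (m : Fin n → ℤ) : Set (Eu n) :=
  {x : Eu n | ∀ i, x i ∈ Set.Icc ((m i : ℝ) * 2 ^ (-k)) ((m i : ℝ) * 2 ^ (-k) + 2 ^ (-k))}

/-- Average of `f` over `Q`. -/
def avg (f : Eu n → ℝ) (Q : Set (Eu n)) : ℝ := ⨍ x in Q, f x

/-- Mean oscillation of `f` over `Q`. -/
def mo (f : Eu n → ℝ) (Q : Set (Eu n)) : ℝ := ⨍ x in Q, |f x - avg f Q|

/-- The BMO seminorm of `f` over `U` (supremum over cubes contained in `U`). -/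
def bmoSup (U : Set (Eu n)) (f : Eu n → ℝ) : ℝ≥0∞ :=
  ⨆ (a : Eu n) (l : ℝ) (_ : 0 < l) (_ : cube a l ⊆ U), ENNReal.ofReal (mo f (cube a l))

/-- The nonhomogeneous `bmo_lam` norm of `f` over `U`. -/
def bmoNorm (U : Set (Eu n)) (lam : ℝ) (f : Eu n → ℝ) : ℝ≥0∞ :=
  (⨆ (a : Eu n) (l : ℝ) (_ : 0 < l) (_ : l < lam) (_ : cube a l ⊆ U),
      ENNReal.ofReal (mo f (cube a l))) +
  ⨆ (a : Eu n) (l : ℝ) (_ : lam ≤ l) (_ : cube a l ⊆ U),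
      ENNReal.ofReal |avg f (cube a l)|

/-- `f ∈ bmo_lam(U)`: integrable on every cube contained in `U`, with finite norm. -/
def MemBmo (U : Set (Eu n)) (lam : ℝ) (f : Eu n → ℝ) : Prop :=
  (∀ (a : Eu n) (l : ℝ), 0 < l → cube a l ⊆ U → IntegrableOn f (cube a l)) ∧
    bmoNorm U lam f < ⊤

/-- Distance between two sets. -/
def setDist (s t : Set (Eu n)) : ℝ := sInf (Set.image2 dist s t)

/-- A Whitney decomposition of an open set `O`, given as a set of
(lower corner, sidelength) pairs of closed dyadic cubes. -/
structure IsWhitney (O : Set (Eu n)) (W : Set (Eu n × ℝ)) : Prop where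
  countable : W.Countable
  dyadic : ∀ q ∈ W, IsDyadic q.1 q.2
  disjointInteriors : ∀ q ∈ W, ∀ q' ∈ W, q ≠ q' →
    interior (cube q.1 q.2) ∩ interior (cube q'.1 q'.2) = ∅
  cover : ⋃ q ∈ W, cube q.1 q.2 = O
  distLower : ∀ q ∈ W, q.2 ≤ setDist (cube q.1 q.2) (frontier O)
  distUpper : ∀ q ∈ W, setDist (cube q.1 q.2) (frontier O) ≤ 4 * Real.sqrt n * q.2
  sizes : ∀ q ∈ W, ∀ q' ∈ W, (cube q.1 q.2 ∩ cube q'.1 q'.2).Nonempty →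
    q.2 / q'.2 ∈ Set.Icc (1/4 : ℝ) 4

/-- Extension hypothesis for `(Ω, lam, C)`: every `f ∈ bmo_lam(Ω)` admits an
extension `F` to `ℝⁿ` with `‖F‖_{BMO(ℝⁿ)} ≤ C ‖f‖_{bmo_lam(Ω)}`. -/
def ExtHyp (Ω : Set (Eu n)) (lam C : ℝ) : Prop :=
  ∀ f : Eu n → ℝ, MemBmo Ω lam f → ∃ F : Eu n → ℝ,
    (∀ (a : Eu n) (l : ℝ), 0 < l → IntegrableOn F (cube a l)) ∧
    (∀ x ∈ Ω, F x = f x) ∧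
    bmoSup Set.univ F ≤ ENNReal.ofReal C * bmoNorm Ω lam f

/-- The set `S_lam = {x ∈ Ω : d_Ω(x) ≥ lam/4}`. -/
def Slam (Ω : Set (Eu n)) (lam : ℝ) : Set (Eu n) := {x ∈ Ω | lam / 4 ≤ dOm Ω x}

/-- `η_lam(x,y) = k_Ω(x, S_lam) + k_Ω(y, S_lam)`. -/
def etaLam (Ω : Set (Eu n)) (lam : ℝ) (x y : Eu n) : ℝ :=
  kDistSet Ω x (Slam Ω lam) + kDistSet Ω y (Slam Ω lam)

open Filter Topology

lemma LipschitzOnWith.Icc_union {α : Type*} [PseudoMetricSpace α] {f : ℝ → α} {K : NNReal}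
    {a b c : ℝ} (h₁ : LipschitzOnWith K f (Icc a b)) (h₂ : LipschitzOnWith K f (Icc b c)) :
    LipschitzOnWith K f (Icc a c) := by
  rw [lipschitzOnWith_iff_dist_le_mul] at *
  have key : ∀ s ∈ Icc a c, ∀ t ∈ Icc a c, s ≤ t → dist (f s) (f t) ≤ K * dist s t := by
    intro s hs t ht hst
    rcases le_total t b with htb | hbt
    · exact h₁ s ⟨hs.1, hst.trans htb⟩ t ⟨hs.1.trans hst, htb⟩
    rcases le_total b s with hbs | hsb
    · exact h₂ s ⟨hbs, hst.trans ht.2⟩ t ⟨hbs.trans hst, ht.2⟩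
    calc dist (f s) (f t) ≤ dist (f s) (f b) + dist (f b) (f t) := dist_triangle _ _ _
      _ ≤ K * dist s b + K * dist b t :=
          add_le_add (h₁ s ⟨hs.1, hsb⟩ b ⟨hs.1.trans hsb, le_rfl⟩)
            (h₂ b ⟨le_rfl, hbt.trans ht.2⟩ t ⟨hbt, ht.2⟩)
      _ = K * dist s t := by
          rw [Real.dist_eq, Real.dist_eq, Real.dist_eq, abs_of_nonpos (by linarith),
            abs_of_nonpos (by linarith), abs_of_nonpos (by linarith)]
          ring
  intro s hs t ht
  rcases le_total s t with hst | hts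
  · exact key s hs t ht hst
  · rw [dist_comm, dist_comm s]
    exact key t ht s hs hts

lemma lipschitzWith_mul_add {c : ℝ} (hc : 0 ≤ c) (d : ℝ) :
    LipschitzWith c.toNNReal (fun t : ℝ => c * t + d) :=
  LipschitzWith.of_dist_le_mul fun s t => by
    rw [Real.dist_eq, Real.dist_eq, Real.coe_toNNReal c hc,
      show c * s + d - (c * t + d) = c * (s - t) by ring, abs_mul, abs_of_nonneg hc]

lemma LipschitzOnWith.comp_mul_add {E : Type*} [PseudoMetricSpace E] {f : ℝ → E} {K : NNReal}
    {s t : Set ℝ} (hf : LipschitzOnWith K f s) {c : ℝ} (hc : 0 ≤ c) (d : ℝ)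
    (hmaps : MapsTo (fun u => c * u + d) t s) :
    LipschitzOnWith (K * c.toNNReal) (fun u => f (c * u + d)) t :=
  hf.comp (lipschitzWith_mul_add hc d).lipschitzOnWith hmaps

lemma LipschitzOnWith.congr {E F : Type*} [PseudoEMetricSpace E] [PseudoEMetricSpace F]
    {f g : E → F} {K : NNReal} {s : Set E} (hf : LipschitzOnWith K f s) (h : EqOn f g s) :
    LipschitzOnWith K g s := fun a ha b hb => by
  rw [← h ha, ← h hb]
  exact hf ha hb

section Reparametrization

variable {E : Type*} [NormedAddCommGroup E] [NormedSpace ℝ E]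

lemma deriv_comp_mul_add (γ : ℝ → E) (c d t : ℝ) :
    deriv (fun s => γ (c * s + d)) t = c • deriv γ (c * t + d) := by
  rw [deriv_comp_mul_left c (fun s => γ (s + d)) t, deriv_comp_add_const]

lemma integral_comp_mul_add_lineIntegrand (g : E → ℝ) (γ : ℝ → E) {c : ℝ} (hc : 0 ≤ c)
    (d a b : ℝ) :
    ∫ t in a..b, g (γ (c * t + d)) * ‖deriv (fun s => γ (c * s + d)) t‖ =
      ∫ t in c * a + d..c * b + d, g (γ t) * ‖deriv γ t‖ := by
  rcases hc.eq_or_lt with rfl | hc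
  · simp
  simp_rw [deriv_comp_mul_add, norm_smul, Real.norm_of_nonneg hc.le, mul_left_comm _ c,
    intervalIntegral.integral_const_mul,
    intervalIntegral.integral_comp_mul_add (fun t => g (γ t) * ‖deriv γ t‖) hc.ne', smul_eq_mul,
    mul_inv_cancel_left₀ hc.ne']

lemma integral_lineIntegrand_congr {g : E → ℝ} {f h : ℝ → E} {a b : ℝ} (hab : a ≤ b)
    (hfh : ∀ t ∈ Ioo a b, f =ᶠ[𝓝 t] h) :
    ∫ t in a..b, g (f t) * ‖deriv f t‖ = ∫ t in a..b, g (h t) * ‖deriv h t‖ :=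
  intervalIntegral.integral_congr_Ioo_of_le hab fun t ht => by
    simp only [(hfh t ht).eq_of_nhds, (hfh t ht).deriv_eq]

end Reparametrization

lemma exists_le_two_pow_le_log {t : ℝ} (ht : 0 ≤ t) :
    ∃ N : ℕ, t ≤ 2 ^ N ∧ (N : ℝ) ≤ 2 * Real.log (1 + t) + 1 := by
  obtain ⟨m, hm, hm'⟩ := exists_nat_pow_near (by linarith : (1 : ℝ) ≤ 1 + t) one_lt_two
  refine ⟨m + 1, by linarith, ?_⟩
  have hlog : m * Real.log 2 ≤ Real.log (1 + t) := by
    rw [← Real.log_pow]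
    exact Real.log_le_log (by positivity) hm
  have := Real.log_two_gt_d9
  push_cast
  nlinarith [(Nat.cast_nonneg m : (0 : ℝ) ≤ m)]

lemma exists_first_eq_of_continuousOn {f : ℝ → ℝ} {a b c : ℝ} (hab : a ≤ b)
    (hf : ContinuousOn f (Icc a b)) (ha : c ≤ f a) (hb : f b ≤ c) :
    ∃ t ∈ Icc a b, f t = c ∧ ∀ s ∈ Icc a t, c ≤ f s := by
  set S := Icc a b ∩ f ⁻¹' Iic c
  have hbdd : BddBelow S := ⟨a, fun s hs => hs.1.1⟩
  have ht : sInf S ∈ S := (hf.preimage_isClosed_of_isClosed isClosed_Icc isClosed_Iic).csInf_mem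
    ⟨b, ⟨hab, le_rfl⟩, hb⟩ hbdd
  set t := sInf S
  have hmin : ∀ s ∈ Icc a t, f s ≤ c → s = t := fun s hs hfs =>
    le_antisymm hs.2 (csInf_le hbdd ⟨⟨hs.1, hs.2.trans ht.1.2⟩, hfs⟩)
  have hft : f t = c := by
    obtain ⟨s, hs, hfs⟩ :=
      intermediate_value_Icc' ht.1.1 (hf.mono (Icc_subset_Icc_right ht.1.2)) ⟨ht.2, ha⟩
    rw [← hmin s hs hfs.le, hfs]
  refine ⟨t, ht.1, hft, fun s hs => le_of_not_gt fun hlt => ?_⟩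
  rw [hmin s hs hlt.le, hft] at hlt
  exact lt_irrefl c hlt

section Curves

variable {Ω : Set (Eu n)} {γ γ₁ γ₂ : ℝ → Eu n} {x y z : Eu n} {g : Eu n → ℝ}

lemma IsCurve.continuousOn (hγ : IsCurve Ω γ x y) : ContinuousOn γ (Icc 0 1) :=
  hγ.lipschitz.choose_spec.continuousOn

lemma IsCurve.integrableOn_norm_deriv (hγ : IsCurve Ω γ x y) :
    IntegrableOn (fun t => ‖deriv γ t‖) (Ioo 0 1) := by
  obtain ⟨K, hK⟩ := hγ.lipschitz
  refine Measure.integrableOn_of_bounded (M := K) (by simp)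
    (measurable_deriv γ).norm.aestronglyMeasurable ?_
  filter_upwards [ae_restrict_mem measurableSet_Ioo] with t ht
  rw [norm_norm]
  exact norm_deriv_le_of_lipschitzOn (Icc_mem_nhds ht.1 ht.2) hK

lemma IsCurve.intervalIntegrable_norm_deriv (hγ : IsCurve Ω γ x y) :
    IntervalIntegrable (fun t => ‖deriv γ t‖) volume 0 1 :=
  (intervalIntegrable_iff_integrableOn_Ioo_of_le zero_le_one).2 hγ.integrableOn_norm_deriv

lemma IsCurve.intervalIntegrable_lineIntegrand (hγ : IsCurve Ω γ x y) (hg : ContinuousOn g Ω) :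
    IntervalIntegrable (fun t => g (γ t) * ‖deriv γ t‖) volume 0 1 :=
  (intervalIntegrable_iff_integrableOn_Ioo_of_le zero_le_one).2 <|
    hγ.integrableOn_norm_deriv.continuousOn_mul_of_subset
      (hg.comp hγ.continuousOn fun t ht => hγ.mem t ht) isCompact_Icc measurableSet_Ioo
      Ioo_subset_Icc_self

lemma IsCurve.reverse (hγ : IsCurve Ω γ x y) : IsCurve Ω (fun t => γ (1 - t)) y x := by
  obtain ⟨K, hK⟩ := hγ.lipschitz
  have hmaps : MapsTo (fun t : ℝ => 1 - t) (Icc 0 1) (Icc 0 1) := fun t ht =>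
    ⟨by linarith [ht.2], by linarith [ht.1]⟩
  refine ⟨⟨K, ?_⟩, by simp [hγ.target], by simp [hγ.source], fun t ht => hγ.mem _ (hmaps ht)⟩
  have h1 : LipschitzWith 1 (fun t : ℝ => 1 - t) := LipschitzWith.of_dist_le_mul fun s t => by
    rw [Real.dist_eq, Real.dist_eq, NNReal.coe_one, one_mul, sub_sub_sub_cancel_left, abs_sub_comm]
  have h := hK.comp h1.lipschitzOnWith hmaps
  rw [mul_one] at h
  exact h

lemma lineIntegral_reverse (g : Eu n → ℝ) (γ : ℝ → Eu n) :
    lineIntegral g (fun t => γ (1 - t)) = lineIntegral g γ := by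
  simp_rw [lineIntegral, deriv_comp_const_sub, norm_neg,
    intervalIntegral.integral_comp_sub_left (fun t => g (γ t) * ‖deriv γ t‖), sub_self, sub_zero]

lemma IsCurve.restrict (hγ : IsCurve Ω γ x y) {a b : ℝ} (ha : 0 ≤ a) (hab : a ≤ b) (hb : b ≤ 1) :
    IsCurve Ω (fun t => γ ((b - a) * t + a)) (γ a) (γ b) := by
  obtain ⟨K, hK⟩ := hγ.lipschitz
  have hmaps : MapsTo (fun t => (b - a) * t + a) (Icc 0 1) (Icc 0 1) := fun t ht =>
    ⟨by nlinarith [ht.1], by nlinarith [ht.2]⟩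
  exact ⟨⟨_, hK.comp_mul_add (sub_nonneg.2 hab) a hmaps⟩, by simp, by simp,
    fun t ht => hγ.mem _ (hmaps ht)⟩

lemma lineIntegral_restrict (g : Eu n → ℝ) (γ : ℝ → Eu n) {a b : ℝ} (hab : a ≤ b) :
    lineIntegral g (fun t => γ ((b - a) * t + a)) = ∫ t in a..b, g (γ t) * ‖deriv γ t‖ := by
  rw [lineIntegral, integral_comp_mul_add_lineIntegrand g γ (sub_nonneg.2 hab)]
  simp

def curveAppend (γ₁ γ₂ : ℝ → Eu n) (t : ℝ) : Eu n :=
  if t ≤ 1 / 2 then γ₁ (2 * t) else γ₂ (2 * t - 1)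

-- Written `2 * t + 0`, the shape that `integral_comp_mul_add_lineIntegrand` rewrites.
lemma curveAppend_eqOn_left (γ₁ γ₂ : ℝ → Eu n) :
    EqOn (curveAppend γ₁ γ₂) (fun t => γ₁ (2 * t + 0)) (Iic (1 / 2)) := fun t ht => by
  simp only [curveAppend, if_pos (show t ≤ 1 / 2 from ht), add_zero]

lemma curveAppend_eqOn_right (γ₁ γ₂ : ℝ → Eu n) :
    EqOn (curveAppend γ₁ γ₂) (fun t => γ₂ (2 * t + -1)) (Ioi (1 / 2)) := fun t ht => by
  simp only [curveAppend, if_neg (not_le.2 (show 1 / 2 < t from ht)), sub_eq_add_neg]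

lemma IsCurve.append (h₁ : IsCurve Ω γ₁ x y) (h₂ : IsCurve Ω γ₂ y z) :
    IsCurve Ω (curveAppend γ₁ γ₂) x z := by
  obtain ⟨K₁, hK₁⟩ := h₁.lipschitz
  obtain ⟨K₂, hK₂⟩ := h₂.lipschitz
  have hmaps₁ : MapsTo (fun t : ℝ => 2 * t + 0) (Icc 0 (1 / 2)) (Icc 0 1) := fun t ht =>
    ⟨by linarith [ht.1], by linarith [ht.2]⟩
  have hmaps₂ : MapsTo (fun t : ℝ => 2 * t + -1) (Icc (1 / 2) 1) (Icc 0 1) := fun t ht =>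
    ⟨by linarith [ht.1], by linarith [ht.2]⟩
  have hmid : curveAppend γ₁ γ₂ (1 / 2) = γ₂ (2 * (1 / 2) + -1) := by
    norm_num [curveAppend, h₁.target, h₂.source]
  have hleft : LipschitzOnWith (max K₁ K₂ * (2 : ℝ).toNNReal) (curveAppend γ₁ γ₂) (Icc 0 (1 / 2)) :=
    ((hK₁.comp_mul_add zero_le_two 0 hmaps₁).congr fun t ht =>
      (curveAppend_eqOn_left γ₁ γ₂ ht.2).symm).weaken (by gcongr; exact le_max_left _ _)
  have hright : LipschitzOnWith (max K₁ K₂ * (2 : ℝ).toNNReal) (curveAppend γ₁ γ₂) (Icc (1 / 2) 1) :=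
    ((hK₂.comp_mul_add zero_le_two (-1) hmaps₂).congr fun t ht => by
      rcases ht.1.eq_or_lt with rfl | h
      · exact hmid.symm
      · exact (curveAppend_eqOn_right γ₁ γ₂ h).symm).weaken (by gcongr; exact le_max_right _ _)
  refine ⟨⟨_, hleft.Icc_union hright⟩, by simp [curveAppend, h₁.source], by
    norm_num [curveAppend, h₂.target], fun t ht => ?_⟩
  rcases le_or_gt t (1 / 2) with h | h
  · rw [curveAppend_eqOn_left γ₁ γ₂ h]
    exact h₁.mem _ (hmaps₁ ⟨ht.1, h⟩)
  · rw [curveAppend_eqOn_right γ₁ γ₂ h]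
    exact h₂.mem _ (hmaps₂ ⟨h.le, ht.2⟩)

lemma lineIntegral_append (h₁ : IsCurve Ω γ₁ x y) (h₂ : IsCurve Ω γ₂ y z)
    (hg : ContinuousOn g Ω) :
    lineIntegral g (curveAppend γ₁ γ₂) = lineIntegral g γ₁ + lineIntegral g γ₂ := by
  have hint := (h₁.append h₂).intervalIntegrable_lineIntegrand hg
  have hhalf : (1 / 2 : ℝ) ∈ uIcc 0 1 := by
    rw [uIcc_of_le zero_le_one]
    norm_num
  rw [lineIntegral, ← intervalIntegral.integral_add_adjacent_intervals
    (hint.mono_set (uIcc_subset_uIcc_left hhalf)) (hint.mono_set (uIcc_subset_uIcc_right hhalf)),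
    integral_lineIntegrand_congr (by norm_num) fun t ht =>
      (curveAppend_eqOn_left γ₁ γ₂).eventuallyEq_of_mem (Iic_mem_nhds ht.2),
    integral_lineIntegrand_congr (by norm_num) fun t ht =>
      (curveAppend_eqOn_right γ₁ γ₂).eventuallyEq_of_mem (Ioi_mem_nhds ht.1),
    integral_comp_mul_add_lineIntegrand g γ₁ zero_le_two,
    integral_comp_mul_add_lineIntegrand g γ₂ zero_le_two]
  norm_num [lineIntegral]

lemma IsCurve.integral_le_mul_arclength (hγ : IsCurve Ω γ x y) (hg : ContinuousOn g Ω)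
    {a b M : ℝ} (ha : 0 ≤ a) (hab : a ≤ b) (hb : b ≤ 1) (hM : 0 ≤ M)
    (hgM : ∀ t ∈ Icc a b, g (γ t) ≤ M) :
    ∫ t in a..b, g (γ t) * ‖deriv γ t‖ ≤ M * arclength γ := by
  have hsub : uIcc a b ⊆ uIcc 0 1 := by
    rw [uIcc_of_le hab, uIcc_of_le zero_le_one]
    exact Icc_subset_Icc ha hb
  have hnorm := hγ.intervalIntegrable_norm_deriv
  calc ∫ t in a..b, g (γ t) * ‖deriv γ t‖ ≤ ∫ t in a..b, M * ‖deriv γ t‖ :=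
        intervalIntegral.integral_mono_on hab
          ((hγ.intervalIntegrable_lineIntegrand hg).mono_set hsub)
          ((hnorm.mono_set hsub).const_mul M) fun t ht =>
          mul_le_mul_of_nonneg_right (hgM t ht) (norm_nonneg _)
    _ ≤ M * arclength γ := by
        rw [intervalIntegral.integral_const_mul]
        exact mul_le_mul_of_nonneg_left (intervalIntegral.integral_mono_interval ha hab hb
          (Eventually.of_forall fun t => norm_nonneg _) hnorm) hM

end Curves

section QuasiHyperbolic

variable {Ω : Set (Eu n)} {x y z : Eu n} {a b : ℝ}

lemma dOm_pos (hΩ : IsDom Ω) (hx : x ∈ Ω) : 0 < dOm Ω x := by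
  obtain ⟨hopen, hconn, hne⟩ := hΩ
  have hfr : (frontier Ω).Nonempty := by
    by_contra h
    rw [not_nonempty_iff_eq_empty, ← isClopen_iff_frontier_eq_empty] at h
    exact hne (h.eq_univ hconn.nonempty)
  refine (isClosed_frontier.notMem_iff_infDist_pos hfr).1 fun hmem => ?_
  rw [hopen.frontier_eq] at hmem
  exact hmem.2 hx

lemma continuousOn_inv_dOm (hΩ : IsDom Ω) : ContinuousOn (fun z => (dOm Ω z)⁻¹) Ω :=
  (continuous_infDist_pt _).continuousOn.inv₀ fun _ hz => (dOm_pos hΩ hz).ne'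

def QHJoinable (Ω : Set (Eu n)) (x y : Eu n) (c : ℝ) : Prop :=
  ∃ γ : ℝ → Eu n, IsCurve Ω γ x y ∧ lineIntegral (fun z => (dOm Ω z)⁻¹) γ ≤ c

lemma QHJoinable.refl (hx : x ∈ Ω) (ha : 0 ≤ a) : QHJoinable Ω x x a :=
  ⟨fun _ => x, ⟨⟨0, fun _ _ _ _ => by simp⟩, rfl, rfl, fun _ _ => hx⟩, by simpa [lineIntegral]⟩

lemma QHJoinable.mono (h : QHJoinable Ω x y a) (hab : a ≤ b) : QHJoinable Ω x y b :=
  let ⟨γ, hγ, hle⟩ := h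
  ⟨γ, hγ, hle.trans hab⟩

lemma QHJoinable.symm (h : QHJoinable Ω x y a) : QHJoinable Ω y x a :=
  let ⟨γ, hγ, hle⟩ := h
  ⟨_, hγ.reverse, by rwa [lineIntegral_reverse]⟩

lemma QHJoinable.trans (hΩ : IsDom Ω) (h₁ : QHJoinable Ω x y a) (h₂ : QHJoinable Ω y z b) :
    QHJoinable Ω x z (a + b) :=
  let ⟨γ₁, hγ₁, hle₁⟩ := h₁
  let ⟨γ₂, hγ₂, hle₂⟩ := h₂
  ⟨_, hγ₁.append hγ₂, by
    rw [lineIntegral_append hγ₁ hγ₂ (continuousOn_inv_dOm hΩ)]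
    exact add_le_add hle₁ hle₂⟩

lemma kDist_le_of_qhJoinable (h : QHJoinable Ω x y a) : kDist Ω x y ≤ a := by
  obtain ⟨γ, hγ, hle⟩ := h
  unfold kDist
  refine le_trans (csInf_le ⟨0, ?_⟩ ?_) hle
  · rintro _ ⟨γ', -, rfl⟩
    exact intervalIntegral.integral_nonneg zero_le_one fun t _ =>
      mul_nonneg (inv_nonneg.2 infDist_nonneg) (norm_nonneg _)
  · exact ⟨γ, hγ, rfl⟩

end QuasiHyperbolic

section EpsDelta

variable {Ω : Set (Eu n)} {ε δ : ℝ} {γ : ℝ → Eu n} {x y z p q : Eu n}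

lemma IsCurve.exists_dist_eq (hγ : IsCurve Ω γ x y) {r : ℝ} (hr : 0 ≤ r) (hrD : r ≤ dist x y) :
    ∃ t ∈ Icc (0 : ℝ) 1, dist (γ t) x = r :=
  intermediate_value_Icc zero_le_one
    ((continuous_id.dist continuous_const).comp_continuousOn hγ.continuousOn)
    ⟨by simpa [hγ.source] using hr, by simpa [hγ.target, dist_comm] using hrD⟩

lemma IsCurve.exists_subarc_outside_balls (hγ : IsCurve Ω γ x y) {r : ℝ} (hr : 0 ≤ r)
    (h2r : 2 * r ≤ dist x y) :
    ∃ a b : ℝ, 0 ≤ a ∧ a ≤ b ∧ b ≤ 1 ∧ dist (γ a) x = r ∧ dist (γ b) y = r ∧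
      ∀ t ∈ Icc a b, r ≤ dist (γ t) x ∧ r ≤ dist (γ t) y := by
  have hc : ∀ w, ContinuousOn (fun t => dist (γ t) w) (Icc 0 1) := fun w =>
    (continuous_id.dist continuous_const).comp_continuousOn hγ.continuousOn
  obtain ⟨b, hb, hyb, hyge⟩ := exists_first_eq_of_continuousOn (c := r) zero_le_one (hc y)
    (by simp only [hγ.source]; linarith) (by simpa [hγ.target] using hr)
  have hxb : r ≤ dist (γ b) x := by linarith [dist_triangle x (γ b) y, dist_comm x (γ b)]
  -- the last time before `b` at which `γ` is at distance `r` from `x`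
  have hmaps : MapsTo (fun s => b - s) (Icc 0 b) (Icc 0 1) := fun s hs =>
    ⟨by linarith [hs.2], by linarith [hs.1, hb.2]⟩
  obtain ⟨s, hs, hxs, hxge⟩ := exists_first_eq_of_continuousOn (c := r) hb.1
    ((hc x).comp (continuousOn_const.sub continuousOn_id) hmaps) (by simpa using hxb)
    (by simpa [hγ.source] using hr)
  refine ⟨b - s, b, by linarith [hs.2], by linarith [hs.1], hb.2, hxs, hyb, fun t ht =>
    ⟨by simpa using hxge (b - t) ⟨by linarith [ht.2], by linarith [ht.1]⟩,
      hyge t ⟨by linarith [hs.2, ht.1], ht.2⟩⟩⟩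


lemma dOm_sub_dist_le (Ω : Set (Eu n)) (z w : Eu n) : dOm Ω w - dist z w ≤ dOm Ω z := by
  have := infDist_le_infDist_add_dist (x := w) (y := z) (s := frontier Ω)
  rw [dist_comm] at this
  unfold dOm
  linarith

lemma IsCurve.qhJoinable_restrict (hΩ : IsDom Ω) (hγ : IsCurve Ω γ x y) {a b m : ℝ} (ha : 0 ≤ a)
    (hab : a ≤ b) (hb : b ≤ 1) (hm : 0 < m) (hd : ∀ t ∈ Icc a b, m ≤ dOm Ω (γ t)) :
    QHJoinable Ω (γ a) (γ b) (m⁻¹ * arclength γ) :=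
  ⟨_, hγ.restrict ha hab hb, by
    rw [lineIntegral_restrict _ _ hab]
    exact hγ.integral_le_mul_arclength (continuousOn_inv_dOm hΩ) ha hab hb (by positivity)
      fun t ht => inv_anti₀ hm (hd t ht)⟩

def hopBound (ε α β : ℝ) : ℝ := ε⁻¹ * (2 / α + 2 / β + 4 / (ε * α * β))

lemma hopBound_pos (hε : 0 < ε) {α β : ℝ} (hα : 0 < α) (hβ : 0 < β) : 0 < hopBound ε α β := by
  unfold hopBound
  positivity

-- Near `p` (or `q`) the distance to the boundary is controlled by `dOm p` (or `dOm q`);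
-- away from both, by the cigar condition.
lemma inv_dOm_le_of_cigar (hε : 0 < ε) {α β : ℝ} (hα : 0 < α) (hβ : 0 < β)
    (hpq : 0 < dist p q) (hp : α * dist p q ≤ dOm Ω p) (hq : β * dist p q ≤ dOm Ω q)
    (hz : ε * (dist z p * dist z q) / dist p q ≤ dOm Ω z) :
    (dOm Ω z)⁻¹ ≤ (2 / α + 2 / β + 4 / (ε * α * β)) / dist p q := by
  set ℓ := dist p q
  have h₁ : 0 ≤ 2 / α := by positivity
  have h₂ : 0 ≤ 2 / β := by positivity
  have h₃ : 0 ≤ 4 / (ε * α * β) := by positivity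
  by_cases hzp : dist z p ≤ α * ℓ / 2
  · calc (dOm Ω z)⁻¹ ≤ (α * ℓ / 2)⁻¹ :=
          inv_anti₀ (by positivity) (by linarith [dOm_sub_dist_le Ω z p])
      _ = 2 / α / ℓ := by field_simp
      _ ≤ _ := div_le_div_of_nonneg_right (by linarith) hpq.le
  by_cases hzq : dist z q ≤ β * ℓ / 2
  · calc (dOm Ω z)⁻¹ ≤ (β * ℓ / 2)⁻¹ :=
          inv_anti₀ (by positivity) (by linarith [dOm_sub_dist_le Ω z q])
      _ = 2 / β / ℓ := by field_simp
      _ ≤ _ := div_le_div_of_nonneg_right (by linarith) hpq.le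
  rw [not_le] at hzp hzq
  have hfar : ε * α * β * ℓ / 4 ≤ dOm Ω z :=
    calc ε * α * β * ℓ / 4 = ε * (α * ℓ / 2 * (β * ℓ / 2)) / ℓ := by field_simp; ring
      _ ≤ ε * (dist z p * dist z q) / ℓ := by gcongr
      _ ≤ dOm Ω z := hz
  calc (dOm Ω z)⁻¹ ≤ (ε * α * β * ℓ / 4)⁻¹ := inv_anti₀ (by positivity) hfar
    _ = 4 / (ε * α * β) / ℓ := by field_simp
    _ ≤ _ := div_le_div_of_nonneg_right (by linarith) hpq.le

lemma IsEpsDeltaDomain.qhJoinable_of_dist_lt (hJ : IsEpsDeltaDomain Ω ε δ) (hΩ : IsDom Ω)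
    (hε : 0 < ε) {α β : ℝ} (hα : 0 < α) (hβ : 0 < β) (hp : p ∈ Ω) (hq : q ∈ Ω)
    (hpq : dist p q < δ) (hdp : α * dist p q ≤ dOm Ω p) (hdq : β * dist p q ≤ dOm Ω q) :
    QHJoinable Ω p q (hopBound ε α β) := by
  rcases eq_or_ne p q with rfl | hne
  · exact QHJoinable.refl hp (hopBound_pos hε hα hβ).le
  have hℓ : 0 < dist p q := dist_pos.2 hne
  obtain ⟨σ, hσ, hlen, hcig⟩ := hJ p hp q hq hpq
  refine ⟨σ, hσ, ?_⟩
  calc lineIntegral (fun z => (dOm Ω z)⁻¹) σ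
      ≤ (2 / α + 2 / β + 4 / (ε * α * β)) / dist p q * arclength σ :=
        hσ.integral_le_mul_arclength (continuousOn_inv_dOm hΩ) le_rfl zero_le_one le_rfl
          (by positivity) fun t ht => inv_dOm_le_of_cigar hε hα hβ hℓ hdp hdq (hcig t ht)
    _ ≤ (2 / α + 2 / β + 4 / (ε * α * β)) / dist p q * (ε⁻¹ * dist p q) := by gcongr
    _ = hopBound ε α β := by unfold hopBound; field_simp

lemma half_mul_le_dOm_of_cigar (hε : 0 ≤ ε)
    (hz : ε * (dist z x * dist z y) / dist x y ≤ dOm Ω z) (h2 : 2 * dist z x ≤ dist x y) :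
    ε / 2 * dist z x ≤ dOm Ω z := by
  rcases (dist_nonneg : 0 ≤ dist x y).eq_or_lt with hD | hD
  · have : dist z x = 0 := by linarith [dist_nonneg (x := z) (y := x)]
    rw [this, mul_zero]
    exact infDist_nonneg
  have hzy : dist x y / 2 ≤ dist z y := by linarith [dist_triangle x z y, dist_comm x z]
  calc ε / 2 * dist z x = ε * (dist z x * (dist x y / 2)) / dist x y := by field_simp
    _ ≤ ε * (dist z x * dist z y) / dist x y := by gcongr
    _ ≤ dOm Ω z := hz

-- Induction on `N`: halve the distance to `x` and hop back.
lemma IsEpsDeltaDomain.qhJoinable_of_radial_points (hJ : IsEpsDeltaDomain Ω ε δ) (hΩ : IsDom Ω)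
    (hε : 0 < ε) (hx : x ∈ Ω) {R : ℝ} (hR : 2 * R < δ)
    (hpts : ∀ r, 0 < r → r ≤ R → ∃ w ∈ Ω, dist w x = r ∧ ε / 2 * r ≤ dOm Ω w) (N : ℕ)
    (hz : z ∈ Ω) (hzx : 0 < dist z x) (hzR : dist z x ≤ R) (hdz : ε / 2 * dist z x ≤ dOm Ω z)
    (hN : 4 * dist z x ≤ 2 ^ N * dOm Ω x) :
    QHJoinable Ω x z (hopBound ε 4 (ε / 2) + N * hopBound ε (ε / 6) (ε / 3)) := by
  induction N generalizing z with
  | zero =>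
    rw [dist_comm] at hzx hzR hdz hN
    simpa using hJ.qhJoinable_of_dist_lt hΩ hε four_pos (half_pos hε) hx hz (by linarith)
      (by simpa using hN) hdz
  | succ N ih =>
    set r := dist z x
    obtain ⟨w, hw, hwx, hdw⟩ := hpts (r / 2) (by positivity) (by linarith)
    have hwz : dist w z ≤ 3 / 2 * r := by linarith [dist_triangle w x z, dist_comm x z]
    have hxw := ih hw (by rw [hwx]; positivity) (by linarith) (by rwa [hwx])
      (by rw [hwx]; rw [pow_succ] at hN; linarith)
    have hwz' := hJ.qhJoinable_of_dist_lt hΩ hε (α := ε / 6) (β := ε / 3) (by positivity)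
      (by positivity) hw hz (by linarith)
      (calc ε / 6 * dist w z ≤ ε / 6 * (3 / 2 * r) := by gcongr
        _ = ε / 2 * (r / 2) := by ring
        _ ≤ dOm Ω w := hdw)
      (calc ε / 3 * dist w z ≤ ε / 3 * (3 / 2 * r) := by gcongr
        _ = ε / 2 * r := by ring
        _ ≤ dOm Ω z := hdz)
    refine (hxw.trans hΩ hwz').mono (le_of_eq ?_)
    push_cast
    ring

lemma IsEpsDeltaDomain.qhJoinable_of_cigar (hJ : IsEpsDeltaDomain Ω ε δ) (hΩ : IsDom Ω)
    (hε : 0 < ε) (hγ : IsCurve Ω γ x y)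
    (hcig : ∀ t ∈ Icc (0 : ℝ) 1, ε * (dist (γ t) x * dist (γ t) y) / dist x y ≤ dOm Ω (γ t))
    (hxy : dist x y < δ) {t₀ : ℝ} (ht₀ : t₀ ∈ Icc (0 : ℝ) 1)
    (hd : dist (γ t₀) x = dist x y / 4) (hD : 0 < dist x y) :
    QHJoinable Ω x (γ t₀) (hopBound ε 4 (ε / 2) +
      (2 * Real.log (1 + dist x y / dOm Ω x) + 1) * hopBound ε (ε / 6) (ε / 3)) := by
  have hx : x ∈ Ω := hγ.source ▸ hγ.mem 0 ⟨le_rfl, zero_le_one⟩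
  have hpts : ∀ r, 0 < r → r ≤ dist x y / 4 →
      ∃ w ∈ Ω, dist w x = r ∧ ε / 2 * r ≤ dOm Ω w := fun r hr hrR => by
    obtain ⟨t, ht, hdt⟩ := hγ.exists_dist_eq hr.le (by linarith)
    exact ⟨γ t, hγ.mem t ht, hdt, hdt ▸ half_mul_le_dOm_of_cigar hε.le (hcig t ht) (by linarith)⟩
  obtain ⟨N, hN, hNlog⟩ := exists_le_two_pow_le_log (div_nonneg hD.le (dOm_pos hΩ hx).le)
  refine (hJ.qhJoinable_of_radial_points hΩ hε hx (R := dist x y / 4) (by linarith) hpts N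
    (hγ.mem t₀ ht₀) (by rw [hd]; positivity) hd.le
    (hd ▸ half_mul_le_dOm_of_cigar hε.le (hcig t₀ ht₀) (by linarith)) ?_).mono ?_
  · rw [div_le_iff₀ (dOm_pos hΩ hx)] at hN
    linarith
  · gcongr
    exact (hopBound_pos hε (by positivity) (by positivity)).le

lemma IsCurve.qhJoinable_of_cigar_outside_balls (hγ : IsCurve Ω γ x y) (hΩ : IsDom Ω)
    (hε : 0 < ε) (hlen : arclength γ ≤ ε⁻¹ * dist x y)
    (hcig : ∀ t ∈ Icc (0 : ℝ) 1, ε * (dist (γ t) x * dist (γ t) y) / dist x y ≤ dOm Ω (γ t))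
    (hD : 0 < dist x y) {a b : ℝ} (ha : 0 ≤ a) (hab : a ≤ b) (hb : b ≤ 1)
    (hmid : ∀ t ∈ Icc a b, dist x y / 4 ≤ dist (γ t) x ∧ dist x y / 4 ≤ dist (γ t) y) :
    QHJoinable Ω (γ a) (γ b) (16 / ε ^ 2) := by
  refine (hγ.qhJoinable_restrict hΩ ha hab hb (m := ε * dist x y / 16) (by positivity)
    fun t ht => ?_).mono ?_
  · calc ε * dist x y / 16 = ε * (dist x y / 4 * (dist x y / 4)) / dist x y := by
          field_simp; norm_num
      _ ≤ ε * (dist (γ t) x * dist (γ t) y) / dist x y := by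
        gcongr
        exacts [(hmid t ht).1, (hmid t ht).2]
      _ ≤ dOm Ω (γ t) := hcig t ⟨ha.trans ht.1, ht.2.trans hb⟩
  · calc (ε * dist x y / 16)⁻¹ * arclength γ ≤ (ε * dist x y / 16)⁻¹ * (ε⁻¹ * dist x y) := by
          gcongr
      _ = 16 / ε ^ 2 := by field_simp

def qhConst (ε : ℝ) : ℝ :=
  2 * hopBound ε 4 (ε / 2) + 4 * hopBound ε (ε / 6) (ε / 3) + 16 / ε ^ 2

lemma qhConst_pos (hε : 0 < ε) : 0 < qhConst ε := by
  have := hopBound_pos hε four_pos (half_pos hε)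
  have := hopBound_pos hε (α := ε / 6) (β := ε / 3) (by positivity) (by positivity)
  unfold qhConst
  positivity

lemma IsEpsDeltaDomain.qhJoinable (hJ : IsEpsDeltaDomain Ω ε δ) (hΩ : IsDom Ω) (hε : 0 < ε)
    (hx : x ∈ Ω) (hy : y ∈ Ω) (hxy : dist x y < δ) :
    QHJoinable Ω x y (qhConst ε * (jDist Ω x y + 1)) := by
  rcases eq_or_ne x y with rfl | hne
  · exact QHJoinable.refl hx (by simpa [jDist] using (qhConst_pos hε).le)
  have hD : 0 < dist x y := dist_pos.2 hne
  obtain ⟨γ, hγ, hlen, hcig⟩ := hJ x hx y hy hxy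
  obtain ⟨a, b, ha, hab, hb, hxa, hyb, hmid⟩ :=
    hγ.exists_subarc_outside_balls (r := dist x y / 4) (by positivity) (by linarith)
  have hleft := hJ.qhJoinable_of_cigar hΩ hε hγ hcig hxy ⟨ha, hab.trans hb⟩ hxa hD
  have hright := hJ.qhJoinable_of_cigar hΩ hε hγ.reverse (t₀ := 1 - b)
    (fun t ht => by
      rw [mul_comm (dist _ y), dist_comm y x]
      exact hcig (1 - t) ⟨by linarith [ht.2], by linarith [ht.1]⟩)
    (by rwa [dist_comm]) ⟨by linarith, by linarith⟩ (by rwa [sub_sub_cancel, dist_comm y x])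
    (by rwa [dist_comm])
  rw [sub_sub_cancel, dist_comm y x] at hright
  have hmiddle := hγ.qhJoinable_of_cigar_outside_balls hΩ hε hlen hcig hD ha hab hb hmid
  refine ((hleft.trans hΩ hmiddle).trans hΩ hright.symm).mono ?_
  have hdx := dOm_pos hΩ hx
  have hdy := dOm_pos hΩ hy
  have hlogx := Real.log_nonneg (le_add_of_nonneg_right (div_nonneg hD.le hdx.le))
  have hlogy := Real.log_nonneg (le_add_of_nonneg_right (div_nonneg hD.le hdy.le))
  have hA₀ := hopBound_pos hε four_pos (half_pos hε)
  have hA₁ := hopBound_pos hε (α := ε / 6) (β := ε / 3) (by positivity) (by positivity)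
  have hε2 : 0 < 16 / ε ^ 2 := by positivity
  rw [jDist, Real.log_mul (by positivity) (by positivity), qhConst]
  nlinarith [mul_nonneg hlogx hA₀.le, mul_nonneg hlogy hA₀.le, mul_nonneg hlogx hε2.le,
    mul_nonneg hlogy hε2.le]

end EpsDelta

theorem stmt_2_general (n : ℕ) (ε : ℝ) (hε : 0 < ε) :
    ∃ C : ℝ, 0 < C ∧ ∀ (Ω : Set (Eu n)) (δ : ℝ), IsDom Ω → 0 < δ →
      IsEpsDeltaDomain Ω ε δ → ∀ x ∈ Ω, ∀ y ∈ Ω, dist x y < δ →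
        (∃ γ : ℝ → Eu n, IsCurve Ω γ x y ∧
          lineIntegral (fun z => (dOm Ω z)⁻¹) γ ≤ C * (jDist Ω x y + 1)) ∧
        kDist Ω x y ≤ C * (jDist Ω x y + 1) := by
  refine ⟨qhConst ε, qhConst_pos hε, fun Ω δ hΩ _ hJ x hx y hy hxy => ?_⟩
  have h := hJ.qhJoinable hΩ hε hx hy hxy
  exact ⟨h, kDist_le_of_qhJoinable h⟩

/-- an `(ε,δ)`-domain is weakly locally quasi-hyperbolically uniform,
via an explicit curve. -/
theorem stmt_2 (n : ℕ) (hn : 1 ≤ n) (ε : ℝ) (hε : 0 < ε) :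
    ∃ C : ℝ, 0 < C ∧ ∀ (Ω : Set (Eu n)) (δ : ℝ), IsDom Ω → 0 < δ →
      IsEpsDeltaDomain Ω ε δ → ∀ x ∈ Ω, ∀ y ∈ Ω, dist x y < δ →
        (∃ γ : ℝ → Eu n, IsCurve Ω γ x y ∧
          lineIntegral (fun z => (dOm Ω z)⁻¹) γ ≤ C * (jDist Ω x y + 1)) ∧
        kDist Ω x y ≤ C * (jDist Ω x y + 1) :=
  stmt_2_general n ε hε
end
end

section
/- Let λ > 0 and f ∈ L¹_loc(ℝⁿ). Define a_f := sup over all dyadic cubes Q of (1/|Q|)∫_Q |f − f_Q|; b_f := sup of |f_{Q₁} − f_{Q₂}| over all pairs of dyadic cubes Q₁, Q₂ with ℓ(Q₁) = ℓ(Q₂) and Q₁ ∩ Q₂ ≠ ∅; and c_f := sup of |f_Q| over all dyadic cubes Q with ℓ(Q) ≥ λ/(16√n). Then ‖f‖_{bmo_λ(ℝⁿ)} ≤ C·(a_f + b_f + c_f) for a constant C depending only on n. -/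
/-!
For a cube `Q` of side `l`, choose the dyadic generation `k` with `l ≤ 2⁻ᵏ ≤ 2l`. Then `Q` is
covered by `2ⁿ` dyadic cubes of generation `k`, each of which meets the cube `Q₀` of that
generation containing the lower corner of `Q`. On each of them `f` deviates on average from
`f_{Q₀}` by at most `a_f + b_f`, and their total volume is at most `2ⁿ(2l)ⁿ`, so
`⨍_Q |f - f_{Q₀}| ≤ 4ⁿ (a_f + b_f)`. This bounds the mean oscillation of `f` on `Q` by twice
that, and, when `l ≥ λ` (so that `2⁻ᵏ ≥ λ/(16√n)`), `|f_Q|` by it plus `c_f`; hence `C = 3·4ⁿ`.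
-/

open Set Metric MeasureTheory
open scoped ENNReal

noncomputable section

variable {n : ℕ}

section SetAverage

variable {α : Type*} [MeasurableSpace α] {μ : Measure α} {s : Set α} {f g : α → ℝ}

lemma setAverage_add_const (hs₀ : μ s ≠ 0) (hs : μ s ≠ ∞) (hf : IntegrableOn f s μ) (c : ℝ) :
    ⨍ x in s, (f x + c) ∂μ = ⨍ x in s, f x ∂μ + c := by
  have : μ.real s ≠ 0 := (ENNReal.toReal_pos hs₀ hs).ne'
  rw [setAverage_eq, setAverage_eq, integral_add hf (integrableOn_const hs), setIntegral_const,
    smul_add, smul_smul, inv_mul_cancel₀ this, one_smul]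

lemma setAverage_mono (hf : IntegrableOn f s μ) (hg : IntegrableOn g s μ) (h : ∀ x, f x ≤ g x) :
    ⨍ x in s, f x ∂μ ≤ ⨍ x in s, g x ∂μ := by
  simp only [setAverage_eq, smul_eq_mul]
  exact mul_le_mul_of_nonneg_left (integral_mono hf hg h) (by positivity)

lemma setAverage_nonneg (h : ∀ x, 0 ≤ f x) : 0 ≤ ⨍ x in s, f x ∂μ := by
  rw [setAverage_eq]
  exact smul_nonneg (by positivity) (integral_nonneg h)

lemma abs_setAverage_le : |⨍ x in s, f x ∂μ| ≤ ⨍ x in s, |f x| ∂μ := by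
  simp only [setAverage_eq, smul_eq_mul, abs_mul, abs_inv, abs_of_nonneg measureReal_nonneg]
  exact mul_le_mul_of_nonneg_left abs_integral_le_integral_abs (by positivity)

lemma abs_setAverage_sub_le (hs₀ : μ s ≠ 0) (hs : μ s ≠ ∞) (hf : IntegrableOn f s μ) (c : ℝ) :
    |⨍ x in s, f x ∂μ - c| ≤ ⨍ x in s, |f x - c| ∂μ := by
  simpa only [sub_eq_add_neg, setAverage_add_const hs₀ hs hf] using
    abs_setAverage_le (μ := μ) (s := s) (f := fun x => f x + -c)

lemma setAverage_abs_sub_le_add (hs₀ : μ s ≠ 0) (hs : μ s ≠ ∞) (hf : IntegrableOn f s μ)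
    (c d : ℝ) : ⨍ x in s, |f x - c| ∂μ ≤ ⨍ x in s, |f x - d| ∂μ + |d - c| := by
  have hd : IntegrableOn (fun x => |f x - d|) s μ := (hf.sub (integrableOn_const hs)).abs
  rw [← setAverage_add_const hs₀ hs hd]
  exact setAverage_mono (hf.sub (integrableOn_const hs)).abs (hd.add (integrableOn_const hs))
    fun x => abs_sub_le _ _ _

lemma setAverage_abs_sub_setAverage_le (hs₀ : μ s ≠ 0) (hs : μ s ≠ ∞)
    (hf : IntegrableOn f s μ) (c : ℝ) :
    ⨍ x in s, |f x - ⨍ y in s, f y ∂μ| ∂μ ≤ 2 * ⨍ x in s, |f x - c| ∂μ := by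
  have h₁ := setAverage_abs_sub_le_add hs₀ hs hf (⨍ y in s, f y ∂μ) c
  have h₂ := abs_setAverage_sub_le hs₀ hs hf c
  rw [abs_sub_comm] at h₁
  linarith

lemma setIntegral_le_sum_of_subset_iUnion {ι : Type*} [Fintype ι] {t : ι → Set α}
    (hg₀ : ∀ x, 0 ≤ g x) (hs : MeasurableSet s) (ht : ∀ i, MeasurableSet (t i))
    (hst : s ⊆ ⋃ i, t i) (hg : ∀ i, IntegrableOn g (t i) μ) :
    ∫ x in s, g x ∂μ ≤ ∑ i, ∫ x in t i, g x ∂μ := by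
  have hind₀ (u : Set α) x : 0 ≤ u.indicator g x := u.indicator_nonneg (fun x _ => hg₀ x) x
  simp only [← integral_indicator hs, ← integral_indicator (ht _)]
  rw [← integral_finsetSum _ fun i _ => (integrable_indicator_iff (ht i)).2 (hg i)]
  refine integral_mono_of_nonneg (.of_forall (hind₀ s))
    (integrable_finsetSum _ fun i _ => (integrable_indicator_iff (ht i)).2 (hg i))
    (.of_forall fun x => ?_)
  show s.indicator g x ≤ ∑ i, (t i).indicator g x
  by_cases hx : x ∈ s
  · obtain ⟨i, hi⟩ := mem_iUnion.1 (hst hx)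
    calc s.indicator g x = (t i).indicator g x := by
          rw [indicator_of_mem hx, indicator_of_mem hi]
      _ ≤ ∑ i, (t i).indicator g x :=
          Finset.single_le_sum (fun j _ => hind₀ (t j) x) (Finset.mem_univ i)
  · rw [indicator_of_notMem hx]
    exact Finset.sum_nonneg fun i _ => hind₀ (t i) x

end SetAverage

lemma volume_cube (a : Eu n) (l : ℝ) : volume (cube a l) = ENNReal.ofReal l ^ n := by
  have h : cube a l = (MeasurableEquiv.toLp 2 (Fin n → ℝ)).symm ⁻¹'
      univ.pi fun i => Icc (a i) (a i + l) := by
    ext x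
    simp [cube, Pi.le_def, forall_and]
  rw [h, (EuclideanSpace.volume_preserving_symm_measurableEquiv_toLp (Fin n)).measure_preimage
    (MeasurableSet.univ_pi fun _ => measurableSet_Icc).nullMeasurableSet]
  simp [Real.volume_Icc_pi]

lemma measureReal_cube (a : Eu n) {l : ℝ} (hl : 0 ≤ l) : volume.real (cube a l) = l ^ n := by
  rw [measureReal_def, volume_cube, ENNReal.toReal_pow, ENNReal.toReal_ofReal hl]

lemma volume_cube_ne_zero (a : Eu n) {l : ℝ} (hl : 0 < l) : volume (cube a l) ≠ 0 := by
  simp [volume_cube, hl]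

lemma volume_cube_ne_top (a : Eu n) (l : ℝ) : volume (cube a l) ≠ ∞ := by
  simp [volume_cube]

lemma isCompact_cube (a : Eu n) (l : ℝ) : IsCompact (cube a l) := by
  have h : cube a l = (EuclideanSpace.equiv (Fin n) ℝ).toHomeomorph ⁻¹'
      univ.pi fun i => Icc (a i) (a i + l) := by
    ext x
    simp [cube, Pi.le_def, forall_and, EuclideanSpace.equiv]
  rw [h, Homeomorph.isCompact_preimage]
  exact isCompact_univ_pi fun _ => isCompact_Icc

lemma dyCube_eq_cube (k : ℤ) (m : Fin n → ℤ) :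
    dyCube k m = cube (WithLp.toLp 2 fun i => (m i : ℝ) * 2 ^ (-k)) (2 ^ (-k)) := rfl

lemma exists_zpow_two_mem_Icc {l : ℝ} (hl : 0 < l) :
    ∃ k : ℤ, l ≤ 2 ^ (-k) ∧ (2 : ℝ) ^ (-k) ≤ 2 * l := by
  obtain ⟨j, hj, hj'⟩ := exists_mem_Ico_zpow hl one_lt_two
  refine ⟨-(j + 1), by rw [neg_neg]; exact hj'.le, ?_⟩
  rw [neg_neg, zpow_add_one₀ two_ne_zero]
  linarith

lemma exists_bool_mem_Icc_floor {h l t y : ℝ} (hh : 0 < h) (hlh : l ≤ h)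
    (hy : y ∈ Icc t (t + l)) :
    ∃ b : Bool,
      y ∈ Icc (((⌊t / h⌋ + b.toNat : ℤ) : ℝ) * h) (((⌊t / h⌋ + b.toNat : ℤ) : ℝ) * h + h) := by
  have h₁ : (⌊t / h⌋ : ℝ) * h ≤ t := (le_div_iff₀ hh).1 (Int.floor_le _)
  have h₂ : t < (⌊t / h⌋ + 1 : ℝ) * h := (div_lt_iff₀ hh).1 (Int.lt_floor_add_one _)
  by_cases hb : y ≤ (⌊t / h⌋ + 1 : ℝ) * h
  · refine ⟨false, ?_, ?_⟩ <;> push_cast [Bool.toNat_false] <;> linarith [hy.1]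
  · refine ⟨true, ?_, ?_⟩ <;> push_cast [Bool.toNat_true] <;> linarith [hy.2]

lemma cube_subset_iUnion_dyCube (a : Eu n) {l : ℝ} {k : ℤ} (hlk : l ≤ 2 ^ (-k)) :
    cube a l ⊆ ⋃ b : Fin n → Bool, dyCube k fun i => ⌊a i / 2 ^ (-k)⌋ + (b i).toNat := by
  intro x hx
  choose b hb using fun i => exists_bool_mem_Icc_floor (zpow_pos two_pos (-k)) hlk (hx i)
  exact mem_iUnion.2 ⟨b, hb⟩

lemma dyCube_inter_nonempty {k : ℤ} {m m' : Fin n → ℤ} (h : ∀ i, |m i - m' i| ≤ 1) :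
    (dyCube k m ∩ dyCube k m').Nonempty := by
  have hh : (0 : ℝ) ≤ 2 ^ (-k) := (zpow_pos two_pos (-k)).le
  have key (j j' : ℤ) (h₁ : j ≤ j') (h₂ : j' ≤ j + 1) :
      (j' : ℝ) * 2 ^ (-k) ∈ Icc ((j : ℝ) * 2 ^ (-k)) ((j : ℝ) * 2 ^ (-k) + 2 ^ (-k)) := by
    have h₁' : (j : ℝ) ≤ j' := by exact_mod_cast h₁
    have h₂' : (j' : ℝ) ≤ j + 1 := by exact_mod_cast h₂
    constructor <;> nlinarith
  refine ⟨WithLp.toLp 2 fun i => ((max (m i) (m' i) : ℤ) : ℝ) * 2 ^ (-k), fun i => ?_, fun i => ?_⟩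
  all_goals
    have := abs_le.1 (h i)
    exact key _ _ (by omega) (by omega)

lemma volume_dyCube_ne_zero (k : ℤ) (m : Fin n → ℤ) : volume (dyCube k m) ≠ 0 := by
  rw [dyCube_eq_cube]
  exact volume_cube_ne_zero _ (zpow_pos two_pos _)

lemma volume_dyCube_ne_top (k : ℤ) (m : Fin n → ℤ) : volume (dyCube k m) ≠ ∞ := by
  rw [dyCube_eq_cube]
  exact volume_cube_ne_top _ _

lemma measureReal_dyCube (k : ℤ) (m : Fin n → ℤ) :
    volume.real (dyCube k m) = ((2 : ℝ) ^ (-k)) ^ n := by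
  rw [dyCube_eq_cube]
  exact measureReal_cube _ (zpow_pos two_pos _).le

lemma isCompact_dyCube (k : ℤ) (m : Fin n → ℤ) : IsCompact (dyCube k m) := by
  rw [dyCube_eq_cube]
  exact isCompact_cube _ _

section DyadicControl

variable {f : Eu n → ℝ} {A B : ℝ}

lemma exists_setAverage_cube_abs_sub_le (hf : LocallyIntegrable f volume) (a : Eu n) {l : ℝ}
    (hl : 0 < l) {k : ℤ} (hlk : l ≤ 2 ^ (-k)) (hkl : (2 : ℝ) ^ (-k) ≤ 2 * l)
    (hA : ∀ m, mo f (dyCube k m) ≤ A)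
    (hB : ∀ m m', (dyCube k m ∩ dyCube k m').Nonempty →
      |avg f (dyCube k m) - avg f (dyCube k m')| ≤ B) :
    ∃ m₀, ⨍ x in cube a l, |f x - avg f (dyCube k m₀)| ≤ 4 ^ n * (A + B) := by
  set m₀ : Fin n → ℤ := fun i => ⌊a i / 2 ^ (-k)⌋
  set δ : (Fin n → Bool) → Fin n → ℤ := fun b i => m₀ i + (b i).toNat
  set c := avg f (dyCube k m₀)
  refine ⟨m₀, ?_⟩
  have hδ b : ⨍ x in dyCube k (δ b), |f x - c| ≤ A + B := calc
    _ ≤ mo f (dyCube k (δ b)) + |avg f (dyCube k (δ b)) - c| :=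
      setAverage_abs_sub_le_add (volume_dyCube_ne_zero _ _) (volume_dyCube_ne_top _ _)
        (hf.integrableOn_isCompact (isCompact_dyCube _ _)) _ _
    _ ≤ A + B := add_le_add (hA _) (hB _ _ (dyCube_inter_nonempty fun i => by
        simp [δ, Bool.toNat_le]))
  have hAB : 0 ≤ A + B := (setAverage_nonneg fun _ => abs_nonneg _).trans (hδ fun _ => false)
  have hint : ∫ x in cube a l, |f x - c| ≤ 2 ^ n * (((2 : ℝ) ^ (-k)) ^ n * (A + B)) := calc
    _ ≤ ∑ b, ∫ x in dyCube k (δ b), |f x - c| :=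
      setIntegral_le_sum_of_subset_iUnion (fun _ => abs_nonneg _)
        (isCompact_cube a l).isClosed.measurableSet
        (fun _ => (isCompact_dyCube _ _).isClosed.measurableSet) (cube_subset_iUnion_dyCube a hlk)
        fun _ => ((hf.integrableOn_isCompact (isCompact_dyCube _ _)).sub
          (integrableOn_const (volume_dyCube_ne_top _ _))).abs
    _ ≤ ∑ _b : Fin n → Bool, ((2 : ℝ) ^ (-k)) ^ n * (A + B) := Finset.sum_le_sum fun b _ => by
      rw [← measure_smul_setAverage _ (volume_dyCube_ne_top _ _), measureReal_dyCube, smul_eq_mul]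
      exact mul_le_mul_of_nonneg_left (hδ b) (by positivity)
    _ = 2 ^ n * (((2 : ℝ) ^ (-k)) ^ n * (A + B)) := by simp
  rw [setAverage_eq, measureReal_cube a hl.le, smul_eq_mul, inv_mul_le_iff₀ (by positivity)]
  calc _ ≤ 2 ^ n * (((2 : ℝ) ^ (-k)) ^ n * (A + B)) := hint
    _ ≤ 2 ^ n * ((2 * l) ^ n * (A + B)) := by gcongr
    _ = l ^ n * (4 ^ n * (A + B)) := by
      rw [mul_pow, show (4 : ℝ) = 2 * 2 by norm_num, mul_pow]
      ring

lemma mo_cube_le (hf : LocallyIntegrable f volume) (a : Eu n) {l : ℝ} (hl : 0 < l)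
    (hA : ∀ k m, mo f (dyCube k m) ≤ A)
    (hB : ∀ k m m', (dyCube k m ∩ dyCube k m').Nonempty →
      |avg f (dyCube k m) - avg f (dyCube k m')| ≤ B) :
    mo f (cube a l) ≤ 2 * 4 ^ n * (A + B) := by
  obtain ⟨k, hlk, hkl⟩ := exists_zpow_two_mem_Icc hl
  obtain ⟨m₀, h⟩ := exists_setAverage_cube_abs_sub_le hf a hl hlk hkl (hA k) (hB k)
  calc mo f (cube a l) ≤ 2 * ⨍ x in cube a l, |f x - avg f (dyCube k m₀)| :=
        setAverage_abs_sub_setAverage_le (volume_cube_ne_zero a hl) (volume_cube_ne_top a l)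
          (hf.integrableOn_isCompact (isCompact_cube a l)) _
    _ ≤ 2 * 4 ^ n * (A + B) := by linarith

lemma div_sixteen_mul_sqrt_le_self {lam : ℝ} (hlam : 0 ≤ lam) (n : ℕ) :
    lam / (16 * √n) ≤ lam := by
  rcases n.eq_zero_or_pos with rfl | hn
  · simpa using hlam
  have : 1 ≤ √(n : ℝ) := Real.one_le_sqrt.2 (by exact_mod_cast hn)
  exact div_le_self hlam (by linarith)

lemma abs_avg_cube_le (hf : LocallyIntegrable f volume) {C lam : ℝ} (hlam : 0 < lam)
    (a : Eu n) {l : ℝ} (hl : lam ≤ l)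
    (hA : ∀ k m, mo f (dyCube k m) ≤ A)
    (hB : ∀ k m m', (dyCube k m ∩ dyCube k m').Nonempty →
      |avg f (dyCube k m) - avg f (dyCube k m')| ≤ B)
    (hC : ∀ k m, lam / (16 * √n) ≤ (2 : ℝ) ^ (-k) → |avg f (dyCube k m)| ≤ C) :
    |avg f (cube a l)| ≤ 4 ^ n * (A + B) + C := by
  have hl₀ : 0 < l := hlam.trans_le hl
  obtain ⟨k, hlk, hkl⟩ := exists_zpow_two_mem_Icc hl₀
  obtain ⟨m₀, h⟩ := exists_setAverage_cube_abs_sub_le hf a hl₀ hlk hkl (hA k) (hB k)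
  have hk : lam / (16 * √n) ≤ (2 : ℝ) ^ (-k) :=
    (div_sixteen_mul_sqrt_le_self hlam.le n).trans (hl.trans hlk)
  calc |avg f (cube a l)|
      ≤ |avg f (cube a l) - avg f (dyCube k m₀)| + |avg f (dyCube k m₀)| := by
        linarith [abs_sub_abs_le_abs_sub (avg f (cube a l)) (avg f (dyCube k m₀))]
    _ ≤ (⨍ x in cube a l, |f x - avg f (dyCube k m₀)|) + C :=
        add_le_add (abs_setAverage_sub_le (volume_cube_ne_zero a hl₀) (volume_cube_ne_top a l)
          (hf.integrableOn_isCompact (isCompact_cube a l)) _) (hC k m₀ hk)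
    _ ≤ 4 ^ n * (A + B) + C := by linarith

end DyadicControl

-- The quantities `a_f`, `b_f` and `c_f`.
def dyadicOscSup (f : Eu n → ℝ) : ℝ≥0∞ :=
  ⨆ (k : ℤ) (m : Fin n → ℤ), ENNReal.ofReal (mo f (dyCube k m))

def dyadicJumpSup (f : Eu n → ℝ) : ℝ≥0∞ :=
  ⨆ (k : ℤ) (m : Fin n → ℤ) (m' : Fin n → ℤ) (_ : (dyCube k m ∩ dyCube k m').Nonempty),
    ENNReal.ofReal |avg f (dyCube k m) - avg f (dyCube k m')|

def dyadicAvgSup (lam : ℝ) (f : Eu n → ℝ) : ℝ≥0∞ :=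
  ⨆ (k : ℤ) (m : Fin n → ℤ) (_ : lam / (16 * √n) ≤ (2 : ℝ) ^ (-k)),
    ENNReal.ofReal |avg f (dyCube k m)|

section DyadicSup

variable {f : Eu n → ℝ} {lam : ℝ}

lemma mo_dyCube_le_toReal (h : dyadicOscSup f ≠ ∞) (k : ℤ) (m : Fin n → ℤ) :
    mo f (dyCube k m) ≤ (dyadicOscSup f).toReal :=
  (ENNReal.ofReal_le_iff_le_toReal h).1 <|
    le_iSup₂ (f := fun k m => ENNReal.ofReal (mo f (dyCube k m))) k m

lemma abs_avg_sub_le_toReal (h : dyadicJumpSup f ≠ ∞) (k : ℤ) (m m' : Fin n → ℤ)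
    (hmm' : (dyCube k m ∩ dyCube k m').Nonempty) :
    |avg f (dyCube k m) - avg f (dyCube k m')| ≤ (dyadicJumpSup f).toReal :=
  (ENNReal.ofReal_le_iff_le_toReal h).1 <|
    le_iSup₂_of_le (f := fun k m => ⨆ (m' : Fin n → ℤ) (_ : (dyCube k m ∩ dyCube k m').Nonempty),
      ENNReal.ofReal |avg f (dyCube k m) - avg f (dyCube k m')|) k m <|
        le_iSup₂_of_le m' hmm' le_rfl

lemma abs_avg_dyCube_le_toReal (h : dyadicAvgSup lam f ≠ ∞) (k : ℤ) (m : Fin n → ℤ)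
    (hk : lam / (16 * √n) ≤ (2 : ℝ) ^ (-k)) :
    |avg f (dyCube k m)| ≤ (dyadicAvgSup lam f).toReal :=
  (ENNReal.ofReal_le_iff_le_toReal h).1 <|
    le_iSup₂_of_le (f := fun k m => ⨆ (_ : lam / (16 * √n) ≤ (2 : ℝ) ^ (-k)),
      ENNReal.ofReal |avg f (dyCube k m)|) k m <| le_iSup_of_le hk le_rfl

lemma bmoNorm_univ_le (hf : LocallyIntegrable f volume) (hlam : 0 < lam) :
    bmoNorm univ lam f ≤
      ENNReal.ofReal (3 * 4 ^ n) * (dyadicOscSup f + dyadicJumpSup f + dyadicAvgSup lam f) := by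
  by_cases htop : dyadicOscSup f + dyadicJumpSup f + dyadicAvgSup lam f = ∞
  · rw [htop, ENNReal.mul_top (by positivity)]
    exact le_top
  obtain ⟨⟨hA, hB⟩, hC⟩ :
      (dyadicOscSup f ≠ ∞ ∧ dyadicJumpSup f ≠ ∞) ∧ dyadicAvgSup lam f ≠ ∞ := by
    simpa [not_or] using htop
  set A := (dyadicOscSup f).toReal
  set B := (dyadicJumpSup f).toReal
  set C := (dyadicAvgSup lam f).toReal
  have hsum : dyadicOscSup f + dyadicJumpSup f + dyadicAvgSup lam f =
      ENNReal.ofReal (A + B + C) := by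
    rw [ENNReal.ofReal_add (by positivity) (by positivity),
      ENNReal.ofReal_add (by positivity) (by positivity), ENNReal.ofReal_toReal hA,
      ENNReal.ofReal_toReal hB, ENNReal.ofReal_toReal hC]
  have h₀ : 0 ≤ A + B ∧ 0 ≤ C := ⟨by positivity, by positivity⟩
  have h₄ : (1 : ℝ) ≤ 4 ^ n := one_le_pow₀ (by norm_num)
  have hsmall a (l : ℝ) (hl : 0 < l) : mo f (cube a l) ≤ 2 * 4 ^ n * (A + B + C) := by
    have := mo_cube_le hf a hl (mo_dyCube_le_toReal hA) (abs_avg_sub_le_toReal hB)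
    nlinarith
  have hlarge a (l : ℝ) (hl : lam ≤ l) : |avg f (cube a l)| ≤ 4 ^ n * (A + B + C) := by
    have := abs_avg_cube_le hf hlam a hl (mo_dyCube_le_toReal hA) (abs_avg_sub_le_toReal hB)
      (abs_avg_dyCube_le_toReal hC)
    nlinarith
  calc bmoNorm univ lam f
      ≤ ENNReal.ofReal (2 * 4 ^ n * (A + B + C)) + ENNReal.ofReal (4 ^ n * (A + B + C)) :=
        add_le_add
          (iSup_le fun a => iSup_le fun l => iSup_le fun hl => iSup_le fun _ => iSup_le fun _ =>
            ENNReal.ofReal_le_ofReal (hsmall a l hl))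
          (iSup_le fun a => iSup_le fun l => iSup_le fun hl => iSup_le fun _ =>
            ENNReal.ofReal_le_ofReal (hlarge a l hl))
    _ = ENNReal.ofReal (3 * 4 ^ n) * (dyadicOscSup f + dyadicJumpSup f + dyadicAvgSup lam f) := by
        rw [← ENNReal.ofReal_add (by positivity) (by positivity), hsum,
          ← ENNReal.ofReal_mul (by positivity)]
        ring_nf

end DyadicSup

theorem stmt_10_general (n : ℕ) :
    ∃ C : ℝ, 0 < C ∧ ∀ lam : ℝ, 0 < lam → ∀ f : Eu n → ℝ,
      LocallyIntegrable f volume →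
      bmoNorm Set.univ lam f ≤ ENNReal.ofReal C *
        ((⨆ (k : ℤ) (m : Fin n → ℤ), ENNReal.ofReal (mo f (dyCube k m))) +
         (⨆ (k : ℤ) (m : Fin n → ℤ) (m' : Fin n → ℤ)
            (_ : (dyCube k m ∩ dyCube k m').Nonempty),
            ENNReal.ofReal |avg f (dyCube k m) - avg f (dyCube k m')|) +
         (⨆ (k : ℤ) (m : Fin n → ℤ) (_ : lam / (16 * Real.sqrt n) ≤ (2:ℝ) ^ (-k)),
            ENNReal.ofReal |avg f (dyCube k m)|)) :=
  ⟨3 * 4 ^ n, by positivity, fun _ hlam _ hf => bmoNorm_univ_le hf hlam⟩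

/-- the `bmo_lam(ℝⁿ)` norm is controlled by dyadic data. -/
theorem stmt_10 (n : ℕ) (hn : 1 ≤ n) :
    ∃ C : ℝ, 0 < C ∧ ∀ lam : ℝ, 0 < lam → ∀ f : Eu n → ℝ,
      LocallyIntegrable f volume →
      bmoNorm Set.univ lam f ≤ ENNReal.ofReal C *
        ((⨆ (k : ℤ) (m : Fin n → ℤ), ENNReal.ofReal (mo f (dyCube k m))) +
         (⨆ (k : ℤ) (m : Fin n → ℤ) (m' : Fin n → ℤ)
            (_ : (dyCube k m ∩ dyCube k m').Nonempty),
            ENNReal.ofReal |avg f (dyCube k m) - avg f (dyCube k m')|) +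
         (⨆ (k : ℤ) (m : Fin n → ℤ) (_ : lam / (16 * Real.sqrt n) ≤ (2:ℝ) ^ (-k)),
            ENNReal.ofReal |avg f (dyCube k m)|)) :=
  stmt_10_general n
end
end
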